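/- Let G = (V, E) be a graph, v ∈ V, and G' = G[V \ {v}]. Let π be an injective ranking of V, let A_π be the set of vertices whose eliminator differs between LFMIS(G, π) and LFMIS(G', π), and F_π the set of vertices in exactly one of the two independent sets. If A_π is nonempty, then v ∈ LFMIS(G, π) and v ∈ F_π; moreover every vertex u ∈ A_π \ {v} has a neighbor w ∈ F_π with π(w) < π(u). -/

import Mathlib

/-!
Membership of `u` in an LFMIS depends only on the membership of the neighbours of `u` of
smaller rank. Hence a vertex `u ≠ v` can only flip, or change its eliminator, if some neighbour
of smaller rank flips. If `v ∉ LFMIS(G, π)`, then `v` does not flip either, so a flipped vertex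
of minimal rank cannot exist, and therefore no vertex is affected.
-/

open scoped Classical

variable {V : Type*}

/-- The lexicographically first maximal independent set under ranking `π`:
`v` is in the LFMIS iff no neighbor of strictly smaller rank is in the LFMIS. -/
noncomputable def lfmis [Fintype V] (G : SimpleGraph V) (π : V → ℝ) : V → Prop :=
  fun v => ∀ u, G.Adj u v → π u < π v → ¬ lfmis G π u
termination_by v => (Finset.univ.filter fun u => π u < π v).card
decreasing_by
  rename_i u _ hlt
  apply Finset.card_lt_card
  constructor
  · intro w hw
    simp only [Finset.mem_filter, Finset.mem_univ, true_and] at hw ⊢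
    exact hw.trans hlt
  · intro hsub
    have := hsub (Finset.mem_filter.mpr ⟨Finset.mem_univ u, hlt⟩)
    simp only [Finset.mem_filter, Finset.mem_univ, true_and] at this
    exact lt_irrefl _ this

/-- The eliminator of `v`: the minimum-rank vertex of `(N(v) ∪ {v}) ∩ LFMIS(G, π)`
(when it exists; otherwise `v` by convention). -/
noncomputable def eliminator [Fintype V] (G : SimpleGraph V) (π : V → ℝ) (v : V) : V :=
  if h : ∃ e, (e = v ∨ G.Adj e v) ∧ lfmis G π e ∧
      ∀ u, (u = v ∨ G.Adj u v) → lfmis G π u → π e ≤ π u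
  then h.choose else v

/-- The graph obtained from `G` by deleting the vertex `v` (making it isolated). -/
def delV (G : SimpleGraph V) (v : V) : SimpleGraph V where
  Adj a b := G.Adj a b ∧ a ≠ v ∧ b ≠ v
  symm := ⟨fun a b h => ⟨h.1.symm, h.2.2, h.2.1⟩⟩
  loopless := ⟨fun a h => G.irrefl h.1⟩

/-- `u` is flipped (for the deletion of `v` from `G`): it belongs to exactly one of
`LFMIS(G, π)` and `LFMIS(G \ v, π)`; the deleted vertex `v` itself is flipped iff
it belongs to `LFMIS(G, π)`. -/
noncomputable def flippedDel [Fintype V] (G : SimpleGraph V) (π : V → ℝ) (v u : V) : Prop :=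
  if u = v then lfmis G π v else ¬ (lfmis G π u ↔ lfmis (delV G v) π u)

/-- `u` is affected (for the deletion of `v` from `G`): its eliminator differs
between `G` and `G \ v`; the deleted vertex `v` itself is affected iff its status
changes, i.e. iff `v ∈ LFMIS(G, π)`. -/
noncomputable def affectedDel [Fintype V] (G : SimpleGraph V) (π : V → ℝ) (v u : V) : Prop :=
  if u = v then lfmis G π v else eliminator G π u ≠ eliminator (delV G v) π u

section LexFirstMIS

variable [Fintype V] (G : SimpleGraph V) (π : V → ℝ)

lemma lfmis_iff (u : V) : lfmis G π u ↔ ∀ w, G.Adj w u → π w < π u → ¬ lfmis G π w := by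
  rw [lfmis]

lemma exists_lfmis_closedNbhd_rank_le (u : V) :
    ∃ w, (w = u ∨ G.Adj w u) ∧ lfmis G π w ∧ π w ≤ π u := by
  by_cases hu : lfmis G π u
  · exact ⟨u, .inl rfl, hu, le_rfl⟩
  · simp only [lfmis_iff G π u, not_forall, not_not] at hu
    obtain ⟨w, hadj, hlt, hw⟩ := hu
    exact ⟨w, .inr hadj, hw, hlt.le⟩

lemma eliminator_spec (u : V) :
    (eliminator G π u = u ∨ G.Adj (eliminator G π u) u) ∧ lfmis G π (eliminator G π u) ∧
      ∀ w, (w = u ∨ G.Adj w u) → lfmis G π w → π (eliminator G π u) ≤ π w := by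
  have h : ∃ e, (e = u ∨ G.Adj e u) ∧ lfmis G π e ∧
      ∀ w, (w = u ∨ G.Adj w u) → lfmis G π w → π e ≤ π w := by
    obtain ⟨w, hwu, hw, -⟩ := exists_lfmis_closedNbhd_rank_le G π u
    obtain ⟨e, he, hmin⟩ := (Finset.univ.filter fun e => (e = u ∨ G.Adj e u) ∧ lfmis G π e)
      |>.exists_min_image π ⟨w, by simp [hwu, hw]⟩
    simp only [Finset.mem_filter, Finset.mem_univ, true_and] at he hmin
    exact ⟨e, he.1, he.2, fun w hwu hw => hmin w ⟨hwu, hw⟩⟩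
  rw [eliminator, dif_pos h]
  exact h.choose_spec

lemma eliminator_rank_le (u : V) : π (eliminator G π u) ≤ π u := by
  obtain ⟨w, hwu, hw, hle⟩ := exists_lfmis_closedNbhd_rank_le G π u
  exact ((eliminator_spec G π u).2.2 w hwu hw).trans hle


variable {v : V}

lemma flippedDel_self_iff : flippedDel G π v v ↔ lfmis G π v := by
  simp [flippedDel]

lemma flippedDel_iff_of_ne {u : V} (hu : u ≠ v) :
    flippedDel G π v u ↔ ¬ (lfmis G π u ↔ lfmis (delV G v) π u) := by
  simp [flippedDel, hu]

lemma exists_adj_flippedDel_lt_of_flippedDel {u : V} (hu : u ≠ v) (hf : flippedDel G π v u) :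
    ∃ w, G.Adj w u ∧ flippedDel G π v w ∧ π w < π u := by
  by_contra! h
  have agree : ∀ w, G.Adj w u → π w < π u → w ≠ v →
      (lfmis G π w ↔ lfmis (delV G v) π w) := fun w hadj hlt hwv =>
    not_not.mp <| (flippedDel_iff_of_ne G π hwv).not.mp fun hfw => (h w hadj hfw).not_gt hlt
  refine (flippedDel_iff_of_ne G π hu).mp hf ?_
  rw [lfmis_iff, lfmis_iff]
  constructor
  · intro hG w ⟨hadj, hwv, _⟩ hlt
    rw [← agree w hadj hlt hwv]
    exact hG w hadj hlt
  · intro hG' w hadj hlt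
    by_cases hwv : w = v
    · subst hwv
      exact fun hw => (h w hadj ((flippedDel_self_iff G π).mpr hw)).not_gt hlt
    · rw [agree w hadj hlt hwv]
      exact hG' w ⟨hadj, hwv, hu⟩ hlt

lemma not_flippedDel_of_not_lfmis (hv : ¬ lfmis G π v) (u : V) : ¬ flippedDel G π v u := by
  intro hu
  obtain ⟨w, hw, hmin⟩ := (Finset.univ.filter (flippedDel G π v)).exists_min_image π
    ⟨u, by simpa using hu⟩
  simp only [Finset.mem_filter, Finset.mem_univ, true_and] at hw hmin
  have hwv : w ≠ v := by
    rintro rfl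
    exact hv ((flippedDel_self_iff G π).mp hw)
  obtain ⟨x, -, hx, hlt⟩ := exists_adj_flippedDel_lt_of_flippedDel G π hwv hw
  exact (hmin x hx).not_gt hlt

lemma exists_adj_flippedDel_lt_of_affectedDel (hπ : Function.Injective π) {u : V} (hu : u ≠ v)
    (ha : affectedDel G π v u) : ∃ w, G.Adj w u ∧ flippedDel G π v w ∧ π w < π u := by
  by_contra! h
  have unflipped : ∀ w, (w = u ∨ G.Adj w u) → π w ≤ π u → ¬ flippedDel G π v w := by
    rintro w (rfl | hadj) hle hfw
    · obtain ⟨x, hx, hfx, hlt⟩ := exists_adj_flippedDel_lt_of_flippedDel G π hu hfw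
      exact (h x hx hfx).not_gt hlt
    · rcases hle.lt_or_eq with hlt | heq
      · exact (h w hadj hfw).not_gt hlt
      · exact G.ne_of_adj hadj (hπ heq)
  have agree : ∀ w, (w = u ∨ G.Adj w u) → π w ≤ π u → w ≠ v →
      (lfmis G π w ↔ lfmis (delV G v) π w) := fun w hwu hle hwv =>
    not_not.mp <| (flippedDel_iff_of_ne G π hwv).not.mp (unflipped w hwu hle)
  obtain ⟨he, heL, hemin⟩ := eliminator_spec G π u
  obtain ⟨he', heL', hemin'⟩ := eliminator_spec (delV G v) π u
  set e := eliminator G π u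
  set e' := eliminator (delV G v) π u
  have hle := eliminator_rank_le G π u
  have hle' := eliminator_rank_le (delV G v) π u
  have hev : e ≠ v := by
    rintro hev
    have hf := unflipped e he hle
    rw [hev, flippedDel_self_iff] at hf
    exact hf (hev ▸ heL)
  have he'v : e' ≠ v := by
    rcases he' with h | h
    · exact h ▸ hu
    · exact h.2.1
  have he'G : e' = u ∨ G.Adj e' u := he'.imp_right (·.1)
  rw [affectedDel, if_neg hu] at ha
  refine ha (hπ (le_antisymm ?_ ?_))
  · exact hemin e' he'G ((agree e' he'G hle' he'v).mpr heL')
  · exact hemin' e (he.imp_right fun hadj => ⟨hadj, hev, hu⟩) ((agree e he hle hev).mp heL)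

end LexFirstMIS

/-- If the set of affected vertices (after deleting `v` from `G`) is nonempty, then
`v ∈ LFMIS(G, π)` and `v` is flipped; moreover every affected vertex `u ≠ v` has a
flipped neighbor of strictly smaller rank. -/
theorem affected_structure_vertex_deletion [Fintype V] (G : SimpleGraph V)
    (π : V → ℝ) (hπ : Function.Injective π) (v : V)
    (hA : ∃ u, affectedDel G π v u) :
    lfmis G π v ∧ flippedDel G π v v ∧
    ∀ u, affectedDel G π v u → u ≠ v →
      ∃ w, G.Adj w u ∧ flippedDel G π v w ∧ π w < π u := by
  have hv : lfmis G π v := by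
    by_contra hv
    obtain ⟨u, hu⟩ := hA
    have huv : u ≠ v := by
      rintro rfl
      exact hv (by simpa [affectedDel] using hu)
    obtain ⟨w, -, hw, -⟩ := exists_adj_flippedDel_lt_of_affectedDel G π hπ huv hu
    exact not_flippedDel_of_not_lfmis G π hv w hw
  exact ⟨hv, (flippedDel_self_iff G π).mpr hv,
    fun u hu huv => exists_adj_flippedDel_lt_of_affectedDel G π hπ huv hu⟩
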